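/- In the setting of the Birman–Schwinger estimate, if φ = φ₊ + φ₋ with supp(φ₋) ⊆ supp(V₋) and supp(φ₊) ∩ supp(V₋) = ∅, then ‖(J+X)φ‖ · (‖φ₊‖ + ‖φ₋‖) ≥ ⟨φ₊, (1+X₊)φ₊⟩ + ⟨φ₋, (1−X₋)φ₋⟩. -/

import Mathlib

/-!
Since `J φ = φ₊ - φ₋` and `φ₊ ⟂ φ₋`, expanding `⟪φ₊ - φ₋, (J + X) φ⟫` gives
`‖φ₊‖² + ‖φ₋‖² + ⟪φ₊, X φ₊⟫ - ⟪φ₋, X φ₋⟫` plus the cross terms `⟪φ₊, X φ₋⟫ - ⟪φ₋, X φ₊⟫`.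
On the support of `φ₊` (resp. `φ₋`) the weight `|V|^{1/2}` equals `V₊^{1/2}` (resp. `V₋^{1/2}`),
so the diagonal terms are those of `X₊` and `X₋`; the cross terms have zero real part because
`X` is self-adjoint. Cauchy–Schwarz and `‖φ₊ - φ₋‖ ≤ ‖φ₊‖ + ‖φ₋‖` then give the bound.

Self-adjointness of `X` is Fubini for the symmetric kernel `w(x) G(x,y) w(y)`. The absolute
integrability that Fubini needs comes from the boundedness of `X` itself: tested against
truncations of `|φ|`, on which the locally integrable Green's function makes every integral
finite, `X` controls the positive double integral, and monotone convergence removes the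
truncation.
-/

open MeasureTheory
noncomputable section

abbrev E3 := EuclideanSpace ℝ (Fin 3)
abbrev L2 := MeasureTheory.Lp ℂ 2 (volume : Measure E3)

/-- The Green's function of `-Δ` on `ℝ³`: kernel of `(-Δ)⁻¹`. -/
def green (x y : E3) : ℝ := 1 / (4 * Real.pi * ‖x - y‖)

open Function ComplexConjugate
open scoped InnerProductSpace ENNReal

theorem Complex.enorm_ofReal_of_nonneg {a : ℝ} (ha : 0 ≤ a) :
    ‖(a : ℂ)‖ₑ = ENNReal.ofReal a := by
  rw [← ofReal_norm, Complex.norm_real, Real.norm_of_nonneg ha]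

section IntegralKernel

variable {α : Type*} [MeasurableSpace α] {μ : Measure α}

def HasIntegralKernel (T : Lp ℂ 2 μ →L[ℂ] Lp ℂ 2 μ) (k : α → α → ℝ) : Prop :=
  ∀ φ : Lp ℂ 2 μ, ∀ᵐ x ∂μ, T φ x = ∫ y, (k x y : ℂ) * φ y ∂μ

theorem lintegral_enorm_mul_le_enorm_mul_enorm {E F : Type*} [NormedAddCommGroup E]
    [NormedAddCommGroup F] (f : Lp E 2 μ) (g : Lp F 2 μ) :
    ∫⁻ x, ‖f x‖ₑ * ‖g x‖ₑ ∂μ ≤ ‖f‖ₑ * ‖g‖ₑ := by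
  have h := eLpNorm_le_eLpNorm_mul_eLpNorm'_of_norm (p := 2) (q := 2) (r := 1)
    (Lp.aestronglyMeasurable f) (Lp.aestronglyMeasurable g) (fun a b => ‖a‖ * ‖b‖) 1
    (Filter.Eventually.of_forall fun x => by simp)
  simpa [eLpNorm_one_eq_lintegral_enorm, enorm_mul, Lp.enorm_def] using h

theorem inner_eq_zero_of_ae_eq_zero_or {𝕜 E : Type*} [RCLike 𝕜] [NormedAddCommGroup E]
    [InnerProductSpace 𝕜 E] {f g : Lp E 2 μ} (h : ∀ᵐ x ∂μ, f x = 0 ∨ g x = 0) :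
    ⟪f, g⟫_𝕜 = 0 := by
  rw [MeasureTheory.L2.inner_def]
  refine integral_eq_zero_of_ae ?_
  filter_upwards [h] with x hx
  rcases hx with hx | hx <;> simp [hx]

theorem eq_sub_of_ae_eq_sign_mul_add {p : ℝ≥0∞} {s : Set α} {σ : α → ℂ}
    (hσs : ∀ x ∈ s, σ x = -1) (hσ : ∀ x ∉ s, σ x = 1) {ψ f g : Lp ℂ p μ}
    (hf : ∀ᵐ x ∂μ, x ∈ s → f x = 0) (hg : ∀ᵐ x ∂μ, x ∉ s → g x = 0)
    (hψ : ∀ᵐ x ∂μ, ψ x = σ x * (f + g) x) : ψ = f - g := by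
  refine Lp.ext ?_
  filter_upwards [hψ, hf, hg, Lp.coeFn_add f g, Lp.coeFn_sub f g] with x hψx hfx hgx hadd hsub
  rw [hψx, hadd, hsub, Pi.add_apply, Pi.sub_apply]
  by_cases hx : x ∈ s
  · rw [hσs x hx, hfx hx]; ring
  · rw [hσ x hx, hgx hx]; ring

theorem exists_Lp_ae_eq_indicator_norm (g : Lp ℂ 2 μ) {S : Set α} (hS : MeasurableSet S) :
    ∃ gS : Lp ℂ 2 μ, ‖gS‖ₑ ≤ ‖g‖ₑ ∧ gS =ᵐ[μ] S.indicator fun y => (‖g y‖ : ℂ) := by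
  have hmem : MemLp (S.indicator fun y => (‖g y‖ : ℂ)) 2 μ :=
    (Lp.memLp g).norm.ofReal.indicator hS
  refine ⟨hmem.toLp _, ?_, hmem.coeFn_toLp⟩
  rw [Lp.enorm_def, Lp.enorm_def, eLpNorm_congr_ae hmem.coeFn_toLp]
  refine eLpNorm_mono fun y => ?_
  by_cases hy : y ∈ S <;> simp [hy]

theorem HasIntegralKernel.inner_self_congr {T₁ T₂ : Lp ℂ 2 μ →L[ℂ] Lp ℂ 2 μ}
    {k₁ k₂ : α → α → ℝ} (h₁ : HasIntegralKernel T₁ k₁) (h₂ : HasIntegralKernel T₂ k₂)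
    {f : Lp ℂ 2 μ} {s : Set α} (hf : ∀ᵐ x ∂μ, x ∉ s → f x = 0)
    (hk : ∀ x ∈ s, ∀ y ∈ s, k₁ x y = k₂ x y) :
    ⟪f, T₁ f⟫_ℂ = ⟪f, T₂ f⟫_ℂ := by
  rw [MeasureTheory.L2.inner_def, MeasureTheory.L2.inner_def]
  refine integral_congr_ae ?_
  filter_upwards [h₁ f, h₂ f, hf] with x h₁x h₂x hfx
  by_cases hx : x ∈ s
  · rw [h₁x, h₂x]
    congr 1
    refine integral_congr_ae ?_
    filter_upwards [hf] with y hfy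
    by_cases hy : y ∈ s
    · rw [hk x hx y hy]
    · rw [hfy hy, mul_zero, mul_zero]
  · simp [hfx hx]

variable {T : Lp ℂ 2 μ →L[ℂ] Lp ℂ 2 μ} {K : α → α → ℝ} {w : α → ℝ}

theorem HasIntegralKernel.apply_eq_zero_of_not_aestronglyMeasurable
    (hT : HasIntegralKernel T fun x y => w x * K x y * w y) (hKm : ∀ x, Measurable (K x))
    (hK : ∀ x, ∀ᵐ y ∂μ, K x y ≠ 0) {f : Lp ℂ 2 μ}
    (hf : ¬AEStronglyMeasurable (fun y => (w y : ℂ) * f y) μ) : T f = 0 := by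
  refine Lp.ext ?_
  filter_upwards [hT f, Lp.coeFn_zero ℂ 2 μ] with x hx h0
  rw [hx, h0, Pi.zero_apply]
  by_cases hwx : w x = 0
  · simp [hwx]
  refine integral_undef fun hint => hf ?_
  have hinv : Measurable fun y => ((w x * K x y : ℝ) : ℂ)⁻¹ :=
    (Complex.measurable_ofReal.comp ((hKm x).const_mul _)).inv
  refine (hinv.aestronglyMeasurable.mul hint.1).congr ?_
  filter_upwards [hK x] with y hy
  have : ((w x * K x y : ℝ) : ℂ) ≠ 0 := by exact_mod_cast mul_ne_zero hwx hy
  simp only [Pi.mul_apply]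
  field_simp
  push_cast
  ring

/-- The weight `w` need not be measurable. If `w * g` fails to be a.e.-measurable for a single
`g`, then so does `w * (f + g)` or `w * f` for every `f`, the Bochner integrals defining `T`
are junk (zero), and linearity forces `T = 0`. -/
theorem HasIntegralKernel.eq_zero_of_not_aestronglyMeasurable
    (hT : HasIntegralKernel T fun x y => w x * K x y * w y) (hKm : ∀ x, Measurable (K x))
    (hK : ∀ x, ∀ᵐ y ∂μ, K x y ≠ 0) {g : Lp ℂ 2 μ}
    (hg : ¬AEStronglyMeasurable (fun y => (w y : ℂ) * g y) μ) : T = 0 := by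
  ext1 f
  change T f = 0
  by_cases hf : AEStronglyMeasurable (fun y => (w y : ℂ) * f y) μ
  · have hfg : ¬AEStronglyMeasurable (fun y => (w y : ℂ) * (f + g) y) μ := fun hfg => hg <|
      (hfg.sub hf).congr <| by
        filter_upwards [Lp.coeFn_add f g] with y hy
        simp only [Pi.sub_apply, hy, Pi.add_apply]
        ring
    have h := hT.apply_eq_zero_of_not_aestronglyMeasurable hKm hK hfg
    rwa [map_add, hT.apply_eq_zero_of_not_aestronglyMeasurable hKm hK hg, add_zero] at h
  · exact hT.apply_eq_zero_of_not_aestronglyMeasurable hKm hK hf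

theorem HasIntegralKernel.lintegral_enorm_mul_le
    (hT : HasIntegralKernel T fun x y => w x * K x y * w y)
    (hw : ∀ x, 0 ≤ w x) (hK : ∀ x y, 0 ≤ K x y) {f g : Lp ℂ 2 μ} {u : α → ℂ}
    (hu : u =ᵐ[μ] fun x => (w x : ℂ) * f x) {r : α → ℝ} (hr : ∀ y, 0 ≤ r y)
    (hg : ∀ᵐ y ∂μ, (w y : ℂ) * g y = r y) (hKr : ∀ x, Integrable (fun y => K x y * r y) μ) :
    ∫⁻ x, ‖u x‖ₑ * ∫⁻ y, ENNReal.ofReal (K x y * r y) ∂μ ∂μ ≤ ‖f‖ₑ * ‖T g‖ₑ := by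
  refine le_of_eq_of_le (lintegral_congr_ae ?_) (lintegral_enorm_mul_le_enorm_mul_enorm f (T g))
  filter_upwards [hu, hT g] with x hux hTx
  have hTgx : T g x = (w x : ℂ) * ((∫ y, K x y * r y ∂μ : ℝ) : ℂ) := by
    rw [hTx, ← integral_complex_ofReal, ← integral_const_mul]
    refine integral_congr_ae ?_
    filter_upwards [hg] with y hy
    push_cast
    rw [← hy]
    ring
  rw [hux, hTgx, enorm_mul, enorm_mul, ← ofReal_integral_eq_lintegral_ofReal (hKr x)
    (Filter.Eventually.of_forall fun y => mul_nonneg (hK x y) (hr y))]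
  rw [Complex.enorm_ofReal_of_nonneg (hw x),
    Complex.enorm_ofReal_of_nonneg (integral_nonneg fun y => mul_nonneg (hK x y) (hr y))]
  ring

theorem HasIntegralKernel.lintegral_enorm_mul_lintegral_indicator_le
    (hT : HasIntegralKernel T fun x y => w x * K x y * w y) (hw : ∀ x, 0 ≤ w x)
    (hK : ∀ x y, 0 ≤ K x y) (hKm : ∀ x, Measurable (K x)) {f g : Lp ℂ 2 μ} {u v : α → ℂ}
    (hu : u =ᵐ[μ] fun x => (w x : ℂ) * f x) (hvm : Measurable v)
    (hv : v =ᵐ[μ] fun y => (w y : ℂ) * g y) {S : Set α} (hS : MeasurableSet S) {c : ℝ}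
    (hvS : ∀ y ∈ S, ‖v y‖ ≤ c) (hKS : ∀ x, IntegrableOn (K x) S μ) :
    ∫⁻ x, ‖u x‖ₑ * ∫⁻ y, S.indicator (fun y => ENNReal.ofReal (K x y) * ‖v y‖ₑ) y ∂μ ∂μ ≤
      ‖f‖ₑ * (‖T‖ₑ * ‖g‖ₑ) := by
  set r : α → ℝ := S.indicator fun y => ‖v y‖
  have hr : ∀ y, 0 ≤ r y := Set.indicator_nonneg fun _ _ => norm_nonneg _
  have hKr : ∀ x y, S.indicator (fun y => ENNReal.ofReal (K x y) * ‖v y‖ₑ) y =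
      ENNReal.ofReal (K x y * r y) := fun x y => by
    by_cases hy : y ∈ S <;> simp [r, hy, ENNReal.ofReal_mul (hK x y), ofReal_norm]
  have hKr_int : ∀ x, Integrable (fun y => K x y * r y) μ := fun x => by
    refine Integrable.mono' (((hKS x).integrable_indicator hS).const_mul c)
      ((hKm x).mul (hvm.norm.indicator hS)).aestronglyMeasurable
      (Filter.Eventually.of_forall fun y => ?_)
    by_cases hy : y ∈ S
    · simp only [r, Set.indicator_of_mem hy, Real.norm_eq_abs,
        abs_of_nonneg (mul_nonneg (hK x y) (norm_nonneg _))]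
      nlinarith [hvS y hy, hK x y]
    · simp [r, hy]
  obtain ⟨gS, hgS, hgS_eq⟩ := exists_Lp_ae_eq_indicator_norm g hS
  have hwgS : ∀ᵐ y ∂μ, (w y : ℂ) * gS y = r y := by
    filter_upwards [hgS_eq, hv] with y hy hvy
    by_cases hyS : y ∈ S
    · simp only [hy, r, Set.indicator_of_mem hyS, hvy, norm_mul, Complex.norm_real,
        Real.norm_of_nonneg (hw y)]
      push_cast
      ring
    · simp [hy, r, hyS]
  simp_rw [hKr]
  calc _ ≤ ‖f‖ₑ * ‖T gS‖ₑ := hT.lintegral_enorm_mul_le hw hK hu hr hwgS hKr_int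
    _ ≤ ‖f‖ₑ * (‖T‖ₑ * ‖g‖ₑ) := by
      gcongr
      exact (T.le_opENorm gS).trans (by gcongr)

theorem HasIntegralKernel.inner_apply_eq_integral
    (hT : HasIntegralKernel T fun x y => w x * K x y * w y)
    {f g : Lp ℂ 2 μ} {u v : α → ℂ} (hu : u =ᵐ[μ] fun x => (w x : ℂ) * f x)
    (hv : v =ᵐ[μ] fun y => (w y : ℂ) * g y) :
    ⟪f, T g⟫_ℂ = ∫ x, ∫ y, conj (u x) * (K x y : ℂ) * v y ∂μ ∂μ := by
  rw [MeasureTheory.L2.inner_def]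
  refine integral_congr_ae ?_
  filter_upwards [hT g, hu] with x hTx hux
  rw [RCLike.inner_apply', hTx, hux, ← integral_const_mul]
  refine integral_congr_ae ?_
  filter_upwards [hv] with y hvy
  rw [hvy, map_mul, Complex.conj_ofReal]
  push_cast
  ring

section SigmaCompact

variable [TopologicalSpace α] [T2Space α] [SigmaCompactSpace α] [OpensMeasurableSpace α]
  [SFinite μ]

theorem HasIntegralKernel.lintegral_enorm_mul_lintegral_le
    (hT : HasIntegralKernel T fun x y => w x * K x y * w y) (hw : ∀ x, 0 ≤ w x)
    (hK : ∀ x y, 0 ≤ K x y) (hKm : Measurable (uncurry K))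
    (hKloc : ∀ x, LocallyIntegrable (K x) μ)
    {f g : Lp ℂ 2 μ} {u v : α → ℂ} (hum : Measurable u) (hvm : Measurable v)
    (hu : u =ᵐ[μ] fun x => (w x : ℂ) * f x) (hv : v =ᵐ[μ] fun y => (w y : ℂ) * g y) :
    ∫⁻ x, ‖u x‖ₑ * ∫⁻ y, ENNReal.ofReal (K x y) * ‖v y‖ₑ ∂μ ∂μ ≤ ‖f‖ₑ * (‖T‖ₑ * ‖g‖ₑ) := by
  set S : ℕ → Set α := fun n => compactCovering α n ∩ {y | ‖v y‖ ≤ n}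
  have hS : ∀ n, MeasurableSet (S n) := fun n =>
    (isCompact_compactCovering α n).measurableSet.inter (measurableSet_le hvm.norm measurable_const)
  have hS_mono : Monotone S := fun m n hmn =>
    Set.inter_subset_inter (compactCovering_subset α hmn) fun y (hy : ‖v y‖ ≤ m) =>
      hy.trans (Nat.cast_le.2 hmn)
  have hS_cover : ∀ y, ∃ n, y ∈ S n := fun y => by
    obtain ⟨m, hm⟩ := exists_mem_compactCovering y
    obtain ⟨k, hk⟩ := exists_nat_ge ‖v y‖
    exact ⟨max m k, compactCovering_subset α (le_max_left m k) hm,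
      hk.trans (Nat.cast_le.2 (le_max_right m k))⟩
  set F : α → α → ℝ≥0∞ := fun x y => ENNReal.ofReal (K x y) * ‖v y‖ₑ
  have hFm : Measurable (uncurry F) :=
    (ENNReal.measurable_ofReal.comp hKm).mul (hvm.enorm.comp measurable_snd)
  have hF_sup : ∀ x y, ⨆ n, (S n).indicator (F x) y = F x y := fun x y => by
    obtain ⟨n, hn⟩ := hS_cover y
    exact le_antisymm (iSup_le fun n => Set.indicator_le_self _ _ y)
      (le_iSup_of_le n (Set.indicator_of_mem hn _).ge)
  have hF_mono : ∀ x, Monotone fun n => (S n).indicator (F x) := fun x m n hmn =>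
    Set.indicator_le_indicator_of_subset (hS_mono hmn) fun _ => bot_le
  have hF_lintegral : ∀ x, ∫⁻ y, F x y ∂μ = ⨆ n, ∫⁻ y, (S n).indicator (F x) y ∂μ := fun x => by
    have hFx : Measurable (F x) := hFm.comp measurable_prodMk_left
    rw [← lintegral_iSup (fun n => hFx.indicator (hS n)) (hF_mono x)]
    exact lintegral_congr fun y => (hF_sup x y).symm
  change ∫⁻ x, ‖u x‖ₑ * ∫⁻ y, F x y ∂μ ∂μ ≤ _
  simp_rw [hF_lintegral, ENNReal.mul_iSup]
  rw [lintegral_iSup]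
  · exact iSup_le fun n => hT.lintegral_enorm_mul_lintegral_indicator_le hw hK
      (fun x => hKm.comp measurable_prodMk_left) hu hvm hv (hS n) (fun y hy => hy.2)
      fun x => ((hKloc x).integrableOn_isCompact (isCompact_compactCovering α n)).mono_set
        Set.inter_subset_left
  · exact fun n => hum.enorm.mul
      (Measurable.lintegral_prod_right' (hFm.indicator (measurable_snd (hS n))))
  · exact fun m n hmn x => mul_le_mul_right (lintegral_mono fun y => hF_mono x hmn y) _

theorem HasIntegralKernel.integrable_uncurry
    (hT : HasIntegralKernel T fun x y => w x * K x y * w y) (hw : ∀ x, 0 ≤ w x)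
    (hK : ∀ x y, 0 ≤ K x y) (hKm : Measurable (uncurry K))
    (hKloc : ∀ x, LocallyIntegrable (K x) μ)
    {f g : Lp ℂ 2 μ} {u v : α → ℂ} (hum : Measurable u) (hvm : Measurable v)
    (hu : u =ᵐ[μ] fun x => (w x : ℂ) * f x) (hv : v =ᵐ[μ] fun y => (w y : ℂ) * g y) :
    Integrable (uncurry fun x y => conj (u x) * (K x y : ℂ) * v y) (μ.prod μ) := by
  have hm : Measurable (uncurry fun x y => conj (u x) * (K x y : ℂ) * v y) :=
    (((Complex.continuous_conj.measurable.comp hum).comp measurable_fst).mul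
      (Complex.measurable_ofReal.comp hKm)).mul (hvm.comp measurable_snd)
  refine ⟨hm.aestronglyMeasurable, ?_⟩
  rw [hasFiniteIntegral_iff_enorm, lintegral_prod _ hm.enorm.aemeasurable]
  refine lt_of_le_of_lt (le_of_eq ?_)
    ((hT.lintegral_enorm_mul_lintegral_le hw hK hKm hKloc hum hvm hu hv).trans_lt (by finiteness))
  refine lintegral_congr fun x => ?_
  rw [← lintegral_const_mul' _ _ enorm_ne_top]
  refine lintegral_congr fun y => ?_
  simp only [uncurry_apply_pair, enorm_mul, RCLike.enorm_conj,
    Complex.enorm_ofReal_of_nonneg (hK x y), mul_assoc]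

theorem HasIntegralKernel.inner_apply_eq_conj_inner_apply
    (hT : HasIntegralKernel T fun x y => w x * K x y * w y) (hw : ∀ x, 0 ≤ w x)
    (hK : ∀ x y, 0 ≤ K x y) (hK_comm : ∀ x y, K x y = K y x) (hKm : Measurable (uncurry K))
    (hKloc : ∀ x, LocallyIntegrable (K x) μ)
    {f g : Lp ℂ 2 μ} {u v : α → ℂ} (hum : Measurable u) (hvm : Measurable v)
    (hu : u =ᵐ[μ] fun x => (w x : ℂ) * f x) (hv : v =ᵐ[μ] fun y => (w y : ℂ) * g y) :
    ⟪f, T g⟫_ℂ = conj ⟪g, T f⟫_ℂ := by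
  rw [hT.inner_apply_eq_integral hu hv, hT.inner_apply_eq_integral hv hu,
    integral_integral_swap (hT.integrable_uncurry hw hK hKm hKloc hum hvm hu hv),
    ← integral_conj]
  refine integral_congr_ae (Filter.Eventually.of_forall fun y => ?_)
  dsimp only
  rw [← integral_conj]
  refine integral_congr_ae (Filter.Eventually.of_forall fun x => ?_)
  simp only [map_mul, Complex.conj_conj, Complex.conj_ofReal, hK_comm x y]
  ring

theorem HasIntegralKernel.isSelfAdjoint
    (hT : HasIntegralKernel T fun x y => w x * K x y * w y) (hw : ∀ x, 0 ≤ w x)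
    (hK : ∀ x y, 0 ≤ K x y) (hK_comm : ∀ x y, K x y = K y x) (hKm : Measurable (uncurry K))
    (hK_ne : ∀ x, ∀ᵐ y ∂μ, K x y ≠ 0) (hKloc : ∀ x, LocallyIntegrable (K x) μ) :
    IsSelfAdjoint T := by
  by_cases hmeas : ∀ g : Lp ℂ 2 μ, AEStronglyMeasurable (fun y => (w y : ℂ) * g y) μ
  · refine ContinuousLinearMap.isSelfAdjoint_iff_isSymmetric.2 fun f g => ?_
    change ⟪T f, g⟫_ℂ = ⟪f, T g⟫_ℂ
    have hf := hmeas f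
    have hg := hmeas g
    rw [hT.inner_apply_eq_conj_inner_apply hw hK hK_comm hKm hKloc
      hf.stronglyMeasurable_mk.measurable hg.stronglyMeasurable_mk.measurable
      hf.ae_eq_mk.symm hg.ae_eq_mk.symm, inner_conj_symm]
  · obtain ⟨g, hg⟩ := not_forall.1 hmeas
    rw [hT.eq_zero_of_not_aestronglyMeasurable (fun x => hKm.comp measurable_prodMk_left) hK_ne hg]
    exact .zero _

end SigmaCompact

end IntegralKernel

theorem re_inner_one_add_add_re_inner_one_sub_le {E : Type*} [NormedAddCommGroup E]
    [InnerProductSpace ℂ E] {J X Xp Xm : E →L[ℂ] E} {φp φm : E}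
    (hJ : J (φp + φm) = φp - φm) (horth : ⟪φp, φm⟫_ℂ = 0)
    (hXp : ⟪φp, X φp⟫_ℂ = ⟪φp, Xp φp⟫_ℂ) (hXm : ⟪φm, X φm⟫_ℂ = ⟪φm, Xm φm⟫_ℂ)
    (hX : (X : E →ₗ[ℂ] E).IsSymmetric) :
    (⟪φp, (1 + Xp) φp⟫_ℂ).re + (⟪φm, (1 - Xm) φm⟫_ℂ).re ≤
      ‖(J + X) (φp + φm)‖ * (‖φp‖ + ‖φm‖) := by
  have hmp : ⟪φm, φp⟫_ℂ = 0 := by rw [← inner_conj_symm, horth, map_zero]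
  have hcross : (⟪φm, X φp⟫_ℂ).re = (⟪φp, X φm⟫_ℂ).re := by
    rw [← inner_conj_symm, Complex.conj_re]
    exact congrArg Complex.re (hX φp φm)
  have hJX : (J + X) (φp + φm) = (φp - φm) + (X φp + X φm) := by
    rw [← hJ, ← map_add]
    rfl
  have hre : (⟪φp, (1 + Xp) φp⟫_ℂ).re + (⟪φm, (1 - Xm) φm⟫_ℂ).re =
      (⟪φp - φm, (J + X) (φp + φm)⟫_ℂ).re := by
    rw [hJX, show (1 + Xp) φp = φp + Xp φp from rfl, show (1 - Xm) φm = φm - Xm φm from rfl]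
    simp only [inner_add_right, inner_sub_left, inner_sub_right, Complex.add_re, Complex.sub_re,
      horth, hmp, hXp, hXm, Complex.zero_re]
    linarith
  calc _ = (⟪φp - φm, (J + X) (φp + φm)⟫_ℂ).re := hre
    _ ≤ ‖φp - φm‖ * ‖(J + X) (φp + φm)‖ := re_inner_le_norm (𝕜 := ℂ) _ _
    _ ≤ ‖(J + X) (φp + φm)‖ * (‖φp‖ + ‖φm‖) := by
      rw [mul_comm]
      gcongr
      exact norm_sub_le _ _

theorem green_nonneg (x y : E3) : 0 ≤ green x y := by
  unfold green
  positivity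

theorem green_comm (x y : E3) : green x y = green y x := by
  rw [green, green, norm_sub_rev]

theorem measurable_green : Measurable (uncurry green) :=
  measurable_const.div ((measurable_fst.sub measurable_snd).norm.const_mul _)

theorem ae_green_ne_zero (x : E3) : ∀ᵐ y, green x y ≠ 0 := by
  filter_upwards [compl_mem_ae_iff.2 (measure_singleton x)] with y hy
  have hxy : 0 < ‖x - y‖ := norm_pos_iff.2 (sub_ne_zero.2 (Ne.symm hy))
  unfold green
  positivity

theorem locallyIntegrable_green (x : E3) : LocallyIntegrable (green x) := by
  set g : E3 → ℝ := fun z => 1 / (4 * Real.pi * ‖z‖)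
  have hg : LocallyIntegrable g := by
    refine locallyIntegrable_of_norm_le_rpow (C := 1 / (4 * Real.pi)) (α := 1) (by simp)
      (by simp) (Filter.Eventually.of_forall fun z => le_of_eq ?_)
      (measurable_const.div (measurable_norm.const_mul _)).aestronglyMeasurable
    rw [Real.rpow_neg_one, Real.norm_eq_abs, abs_of_nonneg (by positivity)]
    ring
  have hshift : green x = g ∘ Homeomorph.addRight (-x) := by
    ext y
    simp [g, green, ← sub_eq_add_neg, norm_sub_rev]
  rw [hshift, ← locallyIntegrable_map_homeomorph, Homeomorph.coe_addRight,
    map_add_right_eq_self]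
  exact hg

/-- In the Birman–Schwinger setting, if `φ = φ₊ + φ₋` with `supp φ₋ ⊆ supp V₋` and
`supp φ₊ ∩ supp V₋ = ∅`, then
`‖(J+X)φ‖ (‖φ₊‖ + ‖φ₋‖) ≥ ⟨φ₊, (1+X₊)φ₊⟩ + ⟨φ₋, (1-X₋)φ₋⟩`. -/
theorem stmt2 (Vp Vm : E3 → ℝ)
    (hVp : ∀ x, 0 ≤ Vp x) (hVm : ∀ x, 0 ≤ Vm x)
    (hdisj : ∀ x, Vp x = 0 ∨ Vm x = 0)
    (J X Xp Xm : L2 →L[ℂ] L2)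
    (hJ : ∀ φ : L2, ∀ᵐ x : E3, J φ x =
      (if 0 ≤ Vp x - Vm x then (1 : ℂ) else -1) * φ x)
    (hX : ∀ φ : L2, ∀ᵐ x : E3, X φ x =
      ∫ y : E3, ((Real.sqrt |Vp x - Vm x| * green x y * Real.sqrt |Vp y - Vm y| : ℝ) : ℂ) * φ y)
    (hXp : ∀ φ : L2, ∀ᵐ x : E3, Xp φ x =
      ∫ y : E3, ((Real.sqrt (Vp x) * green x y * Real.sqrt (Vp y) : ℝ) : ℂ) * φ y)
    (hXm : ∀ φ : L2, ∀ᵐ x : E3, Xm φ x =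
      ∫ y : E3, ((Real.sqrt (Vm x) * green x y * Real.sqrt (Vm y) : ℝ) : ℂ) * φ y)
    (φ φp φm : L2)
    (hsum : φ = φp + φm)
    (hsuppm : ∀ᵐ x : E3, Vm x = 0 → φm x = 0)
    (hsuppp : ∀ᵐ x : E3, Vm x ≠ 0 → φp x = 0) :
    (inner ℂ φp ((1 + Xp) φp) : ℂ).re + (inner ℂ φm ((1 - Xm) φm) : ℂ).re ≤
      ‖(J + X) φ‖ * (‖φp‖ + ‖φm‖) := by
  subst hsum
  have hVp_zero : ∀ x, Vm x ≠ 0 → Vp x = 0 := fun x hx => (hdisj x).resolve_right hx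
  have hX' : HasIntegralKernel X fun x y => √|Vp x - Vm x| * green x y * √|Vp y - Vm y| := hX
  refine re_inner_one_add_add_re_inner_one_sub_le ?_ ?_ ?_ ?_ ?_
  · refine eq_sub_of_ae_eq_sign_mul_add (s := {x | Vm x ≠ 0}) (fun x hx => if_neg ?_)
      (fun x hx => if_pos ?_) hsuppp (by simpa using hsuppm) (hJ _)
    · simpa [hVp_zero x hx] using lt_of_le_of_ne (hVm x) (Ne.symm hx)
    · simpa [not_not.1 hx] using hVp x
  · refine inner_eq_zero_of_ae_eq_zero_or ?_
    filter_upwards [hsuppp, hsuppm] with x hp hm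
    tauto
  · exact hX'.inner_self_congr hXp (s := {x | Vm x = 0}) (by simpa using hsuppp)
      fun x (hx : Vm x = 0) y (hy : Vm y = 0) => by simp [hx, hy, abs_of_nonneg (hVp _)]
  · exact hX'.inner_self_congr hXm (s := {x | Vm x ≠ 0}) (by simpa using hsuppm)
      fun x (hx : Vm x ≠ 0) y (hy : Vm y ≠ 0) => by
        simp [hVp_zero x hx, hVp_zero y hy, abs_of_nonneg (hVm _)]
  · exact (hX'.isSelfAdjoint (fun _ => Real.sqrt_nonneg _) green_nonneg green_comm
      measurable_green ae_green_ne_zero locallyIntegrable_green).isSymmetric
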